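/- arXiv:1905.07914 — 2 statements merged into one kernel-verified Lean document; each statement's English description precedes it below -/
import Mathlib

section
/- Let n ≥ 3, let ξ₁ ≠ ξ₂ ∈ ℝⁿ, set R = |ξ₁−ξ₂|/2, and let C₀ ≥ 1. There exist constants c > 0 and ρ > 0, depending only on n, C₀ and |ξ₁−ξ₂|, with the following property: for every continuously differentiable function w on B(ξ₂,R)∖{ξ₂} satisfying C₀⁻¹ |x−ξ₂|^{2−n} ≤ w(x) ≤ C₀ |x−ξ₂|^{2−n} for all x ∈ B(ξ₂,R)∖{ξ₂}, there exists a point x* such that the closed ball of center x* and radius ρ is contained in B(ξ₂,R)∖{ξ₂} and c ≤ ∫_{B(x*,ρ)} |∇w(x)|² dx. -/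
/-!
Send segments `t ↦ z + t • e`, `t ∈ [a, b]`, radially away from the pole `ξ₂`, starting from
points `z` of a small ball `B(ξ₂, r)`. Since `2 - n < 0`, the two-sided bound forces `w` to
drop along each segment by at least `D = C₀⁻¹ (2a)^(2-n) - C₀ (b/2)^(2-n)`, which is positive
once `a` is small compared with `b`. Cauchy–Schwarz turns this drop into `∫ |∇w|² ≥ D² / (b - a)`
on each segment, and integrating over `z` (Fubini and translation invariance of Lebesgue
measure) bounds the integral of `|∇w|²` over the tube swept out, hence over a ball containing
it that stays away from `ξ₂`, below by `D² |B(0, r)| / (b - a)²`.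
-/

open MeasureTheory Metric Set

noncomputable section

abbrev Euc (n : ℕ) := EuclideanSpace ℝ (Fin n)

open scoped ENNReal

theorem mul_rpow_lt_inv_mul_rpow_div {C y p : ℝ} (hC : 1 ≤ C) (hy : 0 < y) (hp : p ≤ -1) :
    C * y ^ p < C⁻¹ * (y / (2 * C ^ 2)) ^ p := by
  have hC0 : 0 < C := zero_lt_one.trans_le hC
  have hK : 1 ≤ 2 * C ^ 2 := by nlinarith
  have hKpow : 2 * C ^ 2 ≤ (2 * C ^ 2) ^ (-p) := by
    simpa using Real.rpow_le_rpow_of_exponent_le hK (by linarith : (1 : ℝ) ≤ -p)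
  rw [Real.div_rpow hy.le (by positivity), div_eq_mul_inv, ← Real.rpow_neg (by positivity)]
  calc C * y ^ p < C⁻¹ * (y ^ p * (2 * C ^ 2)) := by
        field_simp
        nlinarith [Real.rpow_pos_of_pos hy p]
    _ ≤ C⁻¹ * (y ^ p * (2 * C ^ 2) ^ (-p)) := by gcongr

theorem sq_sub_div_le_integral_deriv_sq {f f' : ℝ → ℝ} {a b : ℝ} (hab : a < b)
    (hf : ∀ t ∈ Icc a b, HasDerivAt f (f' t) t) (hf' : ContinuousOn f' (Icc a b)) :
    (f b - f a) ^ 2 / (b - a) ≤ ∫ t in a..b, f' t ^ 2 := by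
  set m := (f b - f a) / (b - a)
  have hint : IntervalIntegrable f' volume a b := hf'.intervalIntegrable_of_Icc hab.le
  have hint2 : IntervalIntegrable (fun t => f' t ^ 2) volume a b :=
    (hf'.pow 2).intervalIntegrable_of_Icc hab.le
  have hftc : ∫ t in a..b, f' t = f b - f a :=
    intervalIntegral.integral_eq_sub_of_hasDerivAt
      (fun t ht => hf t (uIcc_of_le hab.le ▸ ht)) hint
  -- the variance of `f'` about its mean `m` is nonnegative
  have hvar : 0 ≤ ∫ t in a..b, (f' t ^ 2 - 2 * m * f' t + m ^ 2) :=
    intervalIntegral.integral_nonneg hab.le fun t _ => by nlinarith [sq_nonneg (f' t - m)]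
  rw [intervalIntegral.integral_add (hint2.sub (hint.const_mul _)) intervalIntegrable_const,
    intervalIntegral.integral_sub hint2 (hint.const_mul _), intervalIntegral.integral_const_mul,
    hftc, intervalIntegral.integral_const, smul_eq_mul] at hvar
  have hba : b - a ≠ 0 := (sub_pos.2 hab).ne'
  have hm : (f b - f a) ^ 2 / (b - a) = 2 * m * (f b - f a) - (b - a) * m ^ 2 := by
    simp only [m]
    field_simp
    ring
  linarith

theorem setLIntegral_comp_add_right_le {G : Type*} [AddGroup G] [MeasurableSpace G]
    [MeasurableAdd G] (μ : Measure G) [μ.IsAddRightInvariant] {g : G → ℝ≥0∞} {S V : Set G}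
    (hS : MeasurableSet S) (hV : MeasurableSet V) {c : G} (hSV : ∀ z ∈ S, z + c ∈ V) :
    ∫⁻ z in S, g (z + c) ∂μ ≤ ∫⁻ y in V, g y ∂μ :=
  calc ∫⁻ z in S, g (z + c) ∂μ = ∫⁻ z in S, V.indicator g (z + c) ∂μ :=
        setLIntegral_congr_fun hS fun z hz => (indicator_of_mem (hSV z hz) g).symm
    _ ≤ ∫⁻ z, V.indicator g (z + c) ∂μ := setLIntegral_le_lintegral _ _
    _ = ∫⁻ y in V, g y ∂μ := by rw [lintegral_add_right_eq_self, lintegral_indicator hV]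

theorem norm_gradient_eq_norm_fderiv {F : Type*} [NormedAddCommGroup F] [InnerProductSpace ℝ F]
    [CompleteSpace F] (w : F → ℝ) (x : F) : ‖gradient w x‖ = ‖fderiv ℝ w x‖ := by
  rw [← toDual_gradient, LinearIsometryEquiv.norm_map]

section

variable {E : Type*} [NormedAddCommGroup E] [NormedSpace ℝ E]

theorem sq_sub_div_le_integral_norm_fderiv_sq {w : E → ℝ} {U : Set E} (hU : IsOpen U)
    (hw : ContDiffOn ℝ 1 w U) {x e : E} (he : ‖e‖ ≤ 1) {a b : ℝ} (hab : a < b)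
    (hseg : ∀ t ∈ Icc a b, x + t • e ∈ U) :
    (w (x + b • e) - w (x + a • e)) ^ 2 / (b - a) ≤
      ∫ t in a..b, ‖fderiv ℝ w (x + t • e)‖ ^ 2 := by
  have hfderiv : ContinuousOn (fun t => fderiv ℝ w (x + t • e)) (Icc a b) :=
    (hw.continuousOn_fderiv_of_isOpen hU le_rfl).comp (by fun_prop) hseg
  have hline : ∀ t : ℝ, HasDerivAt (fun s : ℝ => x + s • e) e t := fun t =>
    ((hasDerivAt_id t).smul_const e).const_add x |>.congr_deriv (one_smul ℝ e)
  have hderiv : ∀ t ∈ Icc a b,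
      HasDerivAt (fun s => w (x + s • e)) (fderiv ℝ w (x + t • e) e) t := fun t ht =>
    ((hw.differentiableOn one_ne_zero).differentiableAt (hU.mem_nhds (hseg t ht))).hasFDerivAt
      |>.comp_hasDerivAt t (hline t)
  have hdir : ContinuousOn (fun t => fderiv ℝ w (x + t • e) e) (Icc a b) :=
    hfderiv.clm_apply continuousOn_const
  refine (sq_sub_div_le_integral_deriv_sq hab hderiv hdir).trans
    (intervalIntegral.integral_mono_on hab.le ((hdir.pow 2).intervalIntegrable_of_Icc hab.le)
      ((hfderiv.norm.pow 2).intervalIntegrable_of_Icc hab.le) fun t _ => ?_)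
  rw [← sq_abs]
  gcongr
  calc |fderiv ℝ w (x + t • e) e| ≤ ‖fderiv ℝ w (x + t • e)‖ * ‖e‖ :=
        (fderiv ℝ w (x + t • e)).le_opNorm e
    _ ≤ ‖fderiv ℝ w (x + t • e)‖ := mul_le_of_le_one_right (norm_nonneg _) he

theorem dist_add_smul_self_of_norm_eq_one {e : E} (he : ‖e‖ = 1) (x : E) (t : ℝ) :
    dist (x + t • e) x = |t| := by
  rw [dist_eq_norm, add_sub_cancel_left, norm_smul, he, mul_one, Real.norm_eq_abs]

theorem dist_smul_smul_of_norm_eq_one {e : E} (he : ‖e‖ = 1) (s t : ℝ) :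
    dist (s • e) (t • e) = |s - t| := by
  rw [dist_eq_norm, ← sub_smul, norm_smul, he, mul_one, Real.norm_eq_abs]

theorem abs_dist_add_smul_sub_lt {x z e : E} {r t : ℝ} (he : ‖e‖ = 1) (hz : z ∈ ball x r)
    (ht : 0 ≤ t) : |dist (z + t • e) x - t| < r :=
  calc |dist (z + t • e) x - t| = |dist (z + t • e) x - dist (x + t • e) x| := by
        rw [dist_add_smul_self_of_norm_eq_one he, abs_of_nonneg ht]
    _ ≤ dist (z + t • e) (x + t • e) := abs_dist_sub_le _ _ _
    _ = dist z x := dist_add_right _ _ _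
    _ < r := hz

theorem add_smul_mem_ball_midpoint {ξ z e : E} (he : ‖e‖ = 1) {a b r t : ℝ}
    (hz : z ∈ ball ξ r) (ht : t ∈ Icc a b) :
    z + t • e ∈ ball (ξ + ((a + b) / 2) • e) ((b - a) / 2 + r) := by
  have hmid : |t - (a + b) / 2| ≤ (b - a) / 2 :=
    abs_le.2 ⟨by linarith [ht.1], by linarith [ht.2]⟩
  calc dist (z + t • e) (ξ + ((a + b) / 2) • e)
      ≤ dist z ξ + dist (t • e) (((a + b) / 2) • e) := dist_add_add_le _ _ _ _
    _ < r + (b - a) / 2 := by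
        rw [dist_smul_smul_of_norm_eq_one he]
        linarith [mem_ball.1 hz]
    _ = (b - a) / 2 + r := add_comm _ _

theorem closedBall_midpoint_subset_ball_diff {ξ e : E} (he : ‖e‖ = 1) {a b r R : ℝ}
    (hr : 0 ≤ r) (hab : a ≤ b) (hra : r < a) (hbR : b + r < R) :
    closedBall (ξ + ((a + b) / 2) • e) ((b - a) / 2 + r) ⊆ ball ξ R \ {ξ} := by
  have hcenter : dist (ξ + ((a + b) / 2) • e) ξ = (a + b) / 2 := by
    rw [dist_add_smul_self_of_norm_eq_one he, abs_of_nonneg (by linarith)]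
  refine subset_sdiff_singleton (closedBall_subset_ball' (by linarith)) fun hξ => ?_
  rw [mem_closedBall, dist_comm, hcenter] at hξ
  linarith

theorem sub_le_sub_of_pole_bounds {w : E → ℝ} {U : Set E} {ξ e z : E} (he : ‖e‖ = 1)
    {C p a b r h l : ℝ} (hC : 0 ≤ C) (hp : p ≤ 0)
    (hbound : ∀ x ∈ U, C⁻¹ * dist x ξ ^ p ≤ w x ∧ w x ≤ C * dist x ξ ^ p)
    (hz : z ∈ ball ξ r) (hra : r < a) (hah : a + r ≤ h) (hl : 0 < l) (hlb : l ≤ b - r)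
    (haU : z + a • e ∈ U) (hbU : z + b • e ∈ U) :
    C⁻¹ * h ^ p - C * l ^ p ≤ w (z + a • e) - w (z + b • e) := by
  have hr : 0 ≤ r := dist_nonneg.trans (mem_ball.1 hz).le
  obtain ⟨ha₁, ha₂⟩ := abs_lt.1 (abs_dist_add_smul_sub_lt he hz (by linarith : 0 ≤ a))
  obtain ⟨hb₁, -⟩ := abs_lt.1 (abs_dist_add_smul_sub_lt he hz (by linarith : 0 ≤ b))
  have hnear : C⁻¹ * h ^ p ≤ w (z + a • e) :=
    (mul_le_mul_of_nonneg_left (Real.rpow_le_rpow_of_nonpos (by linarith) (by linarith) hp)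
      (inv_nonneg.2 hC)).trans (hbound _ haU).1
  have hfar : w (z + b • e) ≤ C * l ^ p :=
    (hbound _ hbU).2.trans
      (mul_le_mul_of_nonneg_left (Real.rpow_le_rpow_of_nonpos hl (by linarith) hp) hC)
  linarith

variable [MeasurableSpace E] [BorelSpace E] (μ : Measure E) [μ.IsAddRightInvariant]

theorem lintegral_tube_le [SecondCountableTopology E] [SFinite μ] {g : E → ℝ≥0∞}
    (hg : Measurable g) {S V : Set E} (hS : MeasurableSet S) (hV : MeasurableSet V) {e : E}
    {a b : ℝ} (htube : ∀ z ∈ S, ∀ t ∈ Ioc a b, z + t • e ∈ V) :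
    ∫⁻ z in S, (∫⁻ t in Ioc a b, g (z + t • e)) ∂μ ≤
      ENNReal.ofReal (b - a) * ∫⁻ y in V, g y ∂μ := by
  have hmeas : Measurable fun p : E × ℝ => g (p.1 + p.2 • e) := hg.comp (by fun_prop)
  rw [lintegral_lintegral_swap (f := fun z t => g (z + t • e)) hmeas.aemeasurable]
  calc ∫⁻ t in Ioc a b, (∫⁻ z in S, g (z + t • e) ∂μ)
      ≤ ∫⁻ t in Ioc a b, ∫⁻ y in V, g y ∂μ :=
        setLIntegral_mono' measurableSet_Ioc fun t ht =>
          setLIntegral_comp_add_right_le μ hS hV fun z hz => htube z hz t ht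
    _ = ENNReal.ofReal (b - a) * ∫⁻ y in V, g y ∂μ := by
        rw [setLIntegral_const, Real.volume_Ioc, mul_comm]

theorem mul_measure_le_setIntegral_norm_fderiv_sq [SecondCountableTopology E] [SFinite μ]
    [IsFiniteMeasureOnCompacts μ] {w : E → ℝ} {U : Set E} (hU : IsOpen U)
    (hw : ContDiffOn ℝ 1 w U) {S V K : Set E} (hS : MeasurableSet S) (hV : MeasurableSet V)
    (hK : IsCompact K) (hVK : V ⊆ K) (hKU : K ⊆ U) {e : E} (he : ‖e‖ ≤ 1) {a b D : ℝ}
    (hab : a < b) (hD : 0 ≤ D) (htube : ∀ z ∈ S, ∀ t ∈ Icc a b, z + t • e ∈ V)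
    (hdrop : ∀ z ∈ S, D ≤ w (z + a • e) - w (z + b • e)) :
    D ^ 2 / (b - a) ^ 2 * (μ S).toReal ≤ ∫ y in V, ‖fderiv ℝ w y‖ ^ 2 ∂μ := by
  set g : E → ℝ := fun y => ‖fderiv ℝ w y‖ ^ 2
  have hgU : ContinuousOn g U := (hw.continuousOn_fderiv_of_isOpen hU le_rfl).norm.pow 2
  have hVint : IntegrableOn g V μ := ((hgU.mono hKU).integrableOn_compact hK).mono_set hVK
  have hslice : ∀ z ∈ S, ENNReal.ofReal (D ^ 2 / (b - a)) ≤
      ∫⁻ t in Ioc a b, ENNReal.ofReal (g (z + t • e)) := by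
    intro z hz
    have hseg : ∀ t ∈ Icc a b, z + t • e ∈ U := fun t ht => hKU (hVK (htube z hz t ht))
    have hcont : ContinuousOn (fun t => g (z + t • e)) (Icc a b) :=
      hgU.comp (by fun_prop) hseg
    rw [← ofReal_integral_eq_lintegral_ofReal
        (hcont.integrableOn_Icc.mono_set Ioc_subset_Icc_self)
        (ae_of_all _ fun t => by positivity),
      ← intervalIntegral.integral_of_le hab.le]
    refine ENNReal.ofReal_le_ofReal
      (le_trans ?_ (sq_sub_div_le_integral_norm_fderiv_sq hU hw he hab hseg))
    rw [← neg_sub (w (z + a • e)), neg_sq]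
    gcongr
    exact hdrop z hz
  have hchain : ENNReal.ofReal (D ^ 2 / (b - a)) * μ S ≤
      ENNReal.ofReal ((b - a) * ∫ y in V, g y ∂μ) :=
    calc ENNReal.ofReal (D ^ 2 / (b - a)) * μ S
        = ∫⁻ z in S, ENNReal.ofReal (D ^ 2 / (b - a)) ∂μ :=
          (setLIntegral_const _ _).symm
      _ ≤ ∫⁻ z in S, (∫⁻ t in Ioc a b, ENNReal.ofReal (g (z + t • e))) ∂μ :=
        setLIntegral_mono' hS hslice
      _ ≤ ENNReal.ofReal (b - a) * ∫⁻ y in V, ENNReal.ofReal (g y) ∂μ :=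
        lintegral_tube_le μ ((measurable_fderiv ℝ w).norm.pow_const 2).ennreal_ofReal hS hV
          fun z hz t ht => htube z hz t (Ioc_subset_Icc_self ht)
      _ = ENNReal.ofReal ((b - a) * ∫ y in V, g y ∂μ) := by
        rw [ENNReal.ofReal_mul (sub_pos.2 hab).le,
          ofReal_integral_eq_lintegral_ofReal hVint (ae_of_all _ fun y => by positivity)]
  have hreal : D ^ 2 / (b - a) * (μ S).toReal ≤ (b - a) * ∫ y in V, g y ∂μ := by
    refine (ENNReal.ofReal_le_ofReal_iff (mul_nonneg (sub_pos.2 hab).le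
      (setIntegral_nonneg hV fun y _ => by positivity))).1 ?_
    rw [ENNReal.ofReal_mul (by positivity)]
    refine le_trans ?_ hchain
    gcongr
    exact ENNReal.ofReal_toReal_le
  rwa [sq (b - a), ← div_div, div_mul_eq_mul_div, div_le_iff₀ (sub_pos.2 hab),
    mul_comm _ (b - a)]

theorem le_setIntegral_norm_fderiv_sq_of_pole_bounds [ProperSpace E]
    [IsFiniteMeasureOnCompacts μ] {w : E → ℝ} {ξ e : E} (he : ‖e‖ = 1) {C p R a b r : ℝ}
    (hC : 0 ≤ C) (hp : p ≤ 0) (hr : 0 < r) (hra : 2 * r ≤ a) (hab : 2 * a ≤ b)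
    (hbR : b + r < R) (hw : ContDiffOn ℝ 1 w (ball ξ R \ {ξ}))
    (hbound : ∀ x ∈ ball ξ R \ {ξ}, C⁻¹ * dist x ξ ^ p ≤ w x ∧ w x ≤ C * dist x ξ ^ p)
    (hD : 0 ≤ C⁻¹ * (2 * a) ^ p - C * (b / 2) ^ p) :
    (C⁻¹ * (2 * a) ^ p - C * (b / 2) ^ p) ^ 2 / (b - a) ^ 2 * (μ (ball ξ r)).toReal ≤
      ∫ y in ball (ξ + ((a + b) / 2) • e) ((b - a) / 2 + r), ‖fderiv ℝ w y‖ ^ 2 ∂μ := by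
  have hsub := closedBall_midpoint_subset_ball_diff (ξ := ξ) (a := a) (b := b) he hr.le
    (by linarith) (by linarith) hbR
  have htube : ∀ z ∈ ball ξ r, ∀ t ∈ Icc a b,
      z + t • e ∈ ball (ξ + ((a + b) / 2) • e) ((b - a) / 2 + r) :=
    fun z hz t ht => add_smul_mem_ball_midpoint he hz ht
  have hU : ∀ z ∈ ball ξ r, ∀ t ∈ Icc a b, z + t • e ∈ ball ξ R \ {ξ} :=
    fun z hz t ht => hsub (ball_subset_closedBall (htube z hz t ht))
  exact mul_measure_le_setIntegral_norm_fderiv_sq μ (isOpen_ball.sdiff isClosed_singleton) hw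
    measurableSet_ball measurableSet_ball (isCompact_closedBall _ _) ball_subset_closedBall hsub
    he.le (by linarith) hD htube fun z hz =>
      sub_le_sub_of_pole_bounds he hC hp hbound hz (by linarith) (by linarith) (by linarith)
        (by linarith) (hU z hz a ⟨le_rfl, by linarith⟩) (hU z hz b ⟨by linarith, le_rfl⟩)

end

/-- Lower bound for the local `L²`-norm of the gradient of a function with a
two-sided pole-type bound near `ξ₂`, on some ball well inside `B(ξ₂,|ξ₁−ξ₂|/2) ∖ {ξ₂}`. -/
theorem stmt5 (n : ℕ) (hn : 3 ≤ n) (C₀ : ℝ) (hC₀ : 1 ≤ C₀) (d : ℝ) (hd : 0 < d) :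
    ∃ c > (0 : ℝ), ∃ ρ > (0 : ℝ),
      ∀ ξ₁ ξ₂ : Euc n, ξ₁ ≠ ξ₂ → dist ξ₁ ξ₂ = d →
      ∀ w : Euc n → ℝ,
        ContDiffOn ℝ 1 w (ball ξ₂ (d / 2) \ {ξ₂}) →
        (∀ x ∈ ball ξ₂ (d / 2) \ {ξ₂},
            C₀⁻¹ * dist x ξ₂ ^ ((2:ℝ) - n) ≤ w x ∧
            w x ≤ C₀ * dist x ξ₂ ^ ((2:ℝ) - n)) →
        ∃ xstar : Euc n, closedBall xstar ρ ⊆ ball ξ₂ (d / 2) \ {ξ₂} ∧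
          c ≤ ∫ x in ball xstar ρ, ‖gradient w x‖ ^ 2 := by
  have hp : (2 : ℝ) - n ≤ -1 := by
    have : (3 : ℝ) ≤ n := by exact_mod_cast hn
    linarith
  set b := d / 4 with hb_def
  set a := b / (8 * C₀ ^ 2) with ha_def
  set r := a / 2 with hr_def
  set D := C₀⁻¹ * (2 * a) ^ ((2 : ℝ) - n) - C₀ * (b / 2) ^ ((2 : ℝ) - n)
  have hb : 0 < b := by positivity
  have ha : 0 < a := by positivity
  have hab : 2 * a ≤ b := by
    rw [ha_def, mul_div_assoc', div_le_iff₀ (by positivity)]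
    nlinarith [one_le_pow₀ (n := 2) hC₀]
  have hD : 0 < D := by
    have := mul_rpow_lt_inv_mul_rpow_div hC₀ (by positivity : 0 < b / 2) hp
    simp only [D, show 2 * a = b / 2 / (2 * C₀ ^ 2) by ring]
    linarith
  have hball : 0 < (volume (ball (0 : Euc n) r)).toReal :=
    ENNReal.toReal_pos (measure_ball_pos volume _ (by positivity)).ne' measure_ball_lt_top.ne
  refine ⟨D ^ 2 / (b - a) ^ 2 * (volume (ball (0 : Euc n) r)).toReal,
    mul_pos (div_pos (pow_pos hD 2) (pow_pos (by linarith) 2)) hball, (b - a) / 2 + r,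
    by linarith, fun ξ₁ ξ₂ _ hdist w hw hbound => ?_⟩
  set e : Euc n := d⁻¹ • (ξ₁ - ξ₂)
  have he : ‖e‖ = 1 := by
    rw [norm_smul, ← dist_eq_norm, hdist, norm_inv, Real.norm_of_nonneg hd.le,
      inv_mul_cancel₀ hd.ne']
  refine ⟨ξ₂ + ((a + b) / 2) • e,
    closedBall_midpoint_subset_ball_diff he (by positivity) (by linarith) (by linarith)
      (by linarith), ?_⟩
  simp_rw [norm_gradient_eq_norm_fderiv, ← Measure.addHaar_ball_center volume ξ₂]
  exact le_setIntegral_norm_fderiv_sq_of_pole_bounds volume he (by linarith) (by linarith)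
    (by positivity) (by linarith) hab (by linarith) hw hbound hD.le

end
end

section
/- Let n ≥ 2, ξ ∈ ℝⁿ, 0 < t < t̃, and let w be continuously differentiable on an open set containing the closed annulus {x ∈ ℝⁿ : t ≤ |x−ξ| ≤ t̃}. Then t^{n−1} ∫_{S^{n−1}} |w(ξ + t̃θ) − w(ξ + tθ)|² dσ(θ) ≤ t̃ ∫_{{x : t < |x−ξ| < t̃}} |∇w(x)|² dx, where dσ is the surface measure on the unit sphere S^{n−1} ⊂ ℝⁿ. -/
/-!
On each ray `s ↦ ξ + s • θ` the fundamental theorem of calculus and the Cauchy–Schwarz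
inequality give `|w (ξ + t' θ) - w (ξ + t θ)|² ≤ (t' - t) ∫_t^{t'} |∇w (ξ + s θ)|² ds`.
Since `t ^ (n - 1) ≤ s ^ (n - 1)` on `[t, t']`, multiplying by `t ^ (n - 1)` inserts the Jacobian
`s ^ (n - 1)` of polar coordinates under the integral, and integrating over the sphere turns the
right-hand side into the integral over the annulus, by the polar decomposition
`Measure.measurePreserving_homeomorphUnitSphereProd` of Lebesgue measure.
-/

open MeasureTheory Metric Set

noncomputable section

theorem sq_integral_le_measureReal_mul_integral_sq {α : Type*} [MeasurableSpace α]
    {μ : Measure α} [IsFiniteMeasure μ] {f : α → ℝ} (hf : Integrable f μ)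
    (hf2 : Integrable (fun x => f x ^ 2) μ) :
    (∫ x, f x ∂μ) ^ 2 ≤ μ.real univ * ∫ x, f x ^ 2 ∂μ := by
  rcases eq_zero_or_neZero μ with rfl | _
  · simp
  set V := μ.real univ
  set I := ∫ x, f x ∂μ
  set J := ∫ x, f x ^ 2 ∂μ
  have hexp : ∫ x, (V * f x - I) ^ 2 ∂μ = V * (V * J - I ^ 2) := by
    have hint : Integrable (fun x => V ^ 2 * f x ^ 2 - 2 * V * I * f x) μ :=
      (hf2.const_mul _).sub (hf.const_mul _)
    simp only [fun x => show (V * f x - I) ^ 2 = V ^ 2 * f x ^ 2 - 2 * V * I * f x + I ^ 2 by ring]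
    rw [integral_add hint (integrable_const _), integral_sub (hf2.const_mul _) (hf.const_mul _),
      integral_const_mul, integral_const_mul, integral_const, smul_eq_mul]
    ring
  have hV : 0 < V := measureReal_univ_pos
  have : 0 ≤ V * (V * J - I ^ 2) := hexp ▸ integral_nonneg fun x => sq_nonneg _
  exact sub_nonneg.1 (nonneg_of_mul_nonneg_right this hV)

section Line

variable {E F : Type*} [NormedAddCommGroup E] [NormedSpace ℝ E] [NormedAddCommGroup F]
  [NormedSpace ℝ F] {w : E → F} {U : Set E} {x v : E}

theorem ContDiffOn.continuousOn_fderiv_comp_line (hU : IsOpen U) (hw : ContDiffOn ℝ 1 w U)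
    {S : Set ℝ} (hS : ∀ s ∈ S, x + s • v ∈ U) :
    ContinuousOn (fun s : ℝ => fderiv ℝ w (x + s • v)) S :=
  (hw.continuousOn_fderiv_of_isOpen hU le_rfl).comp (by fun_prop) hS

theorem ContDiffOn.sub_eq_integral_fderiv_apply [CompleteSpace F] (hU : IsOpen U)
    (hw : ContDiffOn ℝ 1 w U) {a b : ℝ} (hab : a ≤ b) (hseg : ∀ s ∈ Icc a b, x + s • v ∈ U) :
    w (x + b • v) - w (x + a • v) = ∫ s in a..b, fderiv ℝ w (x + s • v) v := by
  refine (intervalIntegral.integral_eq_sub_of_hasDerivAt (f := fun s => w (x + s • v))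
    (fun s hs => ?_) ?_).symm
  · rw [uIcc_of_le hab] at hs
    have hdiff : DifferentiableAt ℝ w (x + s • v) :=
      (hw.differentiableOn one_ne_zero).differentiableAt (hU.mem_nhds (hseg s hs))
    simpa [Function.comp_def] using
      hdiff.hasFDerivAt.comp_hasDerivAt s (((hasDerivAt_id s).smul_const v).const_add x)
  · exact ((hw.continuousOn_fderiv_comp_line hU hseg).clm_apply continuousOn_const
      ).intervalIntegrable_of_Icc hab

end Line

section Gradient

variable {E : Type*} [NormedAddCommGroup E] [InnerProductSpace ℝ E] [CompleteSpace E]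

theorem norm_gradient_eq_norm_fderiv_s6 (w : E → ℝ) (x : E) :
    ‖gradient w x‖ = ‖fderiv ℝ w x‖ := by
  rw [← toDual_gradient, LinearIsometryEquiv.norm_map]

theorem abs_fderiv_apply_le_norm_gradient_mul (w : E → ℝ) (x v : E) :
    |fderiv ℝ w x v| ≤ ‖gradient w x‖ * ‖v‖ := by
  rw [← inner_gradient_left]
  exact abs_real_inner_le_norm _ _

variable {w : E → ℝ} {U : Set E} {x v : E} {a b : ℝ}

theorem ContDiffOn.continuousOn_norm_gradient (hU : IsOpen U) (hw : ContDiffOn ℝ 1 w U) :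
    ContinuousOn (fun x => ‖gradient w x‖) U := by
  simpa only [norm_gradient_eq_norm_fderiv_s6] using
    (hw.continuousOn_fderiv_of_isOpen hU le_rfl).norm

theorem ContDiffOn.continuousOn_norm_gradient_comp_line (hU : IsOpen U)
    (hw : ContDiffOn ℝ 1 w U) {S : Set ℝ} (hS : ∀ s ∈ S, x + s • v ∈ U) :
    ContinuousOn (fun s : ℝ => ‖gradient w (x + s • v)‖) S :=
  (hw.continuousOn_norm_gradient hU).comp (by fun_prop) hS

theorem ContDiffOn.sq_sub_le_mul_integral_sq_norm_gradient (hU : IsOpen U)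
    (hw : ContDiffOn ℝ 1 w U) (hab : a ≤ b) (hv : ‖v‖ ≤ 1)
    (hseg : ∀ s ∈ Icc a b, x + s • v ∈ U) :
    (w (x + b • v) - w (x + a • v)) ^ 2 ≤
      (b - a) * ∫ s in Ioo a b, ‖gradient w (x + s • v)‖ ^ 2 := by
  set φ : ℝ → ℝ := fun s => fderiv ℝ w (x + s • v) v
  have hφ : ContinuousOn φ (Icc a b) :=
    (hw.continuousOn_fderiv_comp_line hU hseg).clm_apply continuousOn_const
  have hφ_le : ∀ s, φ s ^ 2 ≤ ‖gradient w (x + s • v)‖ ^ 2 := fun s => by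
    rw [← sq_abs]
    refine pow_le_pow_left₀ (abs_nonneg _) ?_ 2
    calc |φ s| ≤ ‖gradient w (x + s • v)‖ * ‖v‖ := abs_fderiv_apply_le_norm_gradient_mul w _ v
      _ ≤ ‖gradient w (x + s • v)‖ := mul_le_of_le_one_right (norm_nonneg _) hv
  have hIoo : ∀ {f : ℝ → ℝ}, ContinuousOn f (Icc a b) → IntegrableOn f (Ioo a b) := fun hf =>
    (hf.integrableOn_Icc).mono_set Ioo_subset_Icc_self
  calc (w (x + b • v) - w (x + a • v)) ^ 2 = (∫ s in Ioo a b, φ s) ^ 2 := by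
        rw [hw.sub_eq_integral_fderiv_apply hU hab hseg, intervalIntegral.integral_of_le hab,
          integral_Ioc_eq_integral_Ioo]
    _ ≤ (b - a) * ∫ s in Ioo a b, φ s ^ 2 := by
        simpa [hab] using sq_integral_le_measureReal_mul_integral_sq (hIoo hφ) (hIoo (hφ.pow 2))
    _ ≤ (b - a) * ∫ s in Ioo a b, ‖gradient w (x + s • v)‖ ^ 2 :=
        mul_le_mul_of_nonneg_left (setIntegral_mono (hIoo (hφ.pow 2))
          (hIoo ((hw.continuousOn_norm_gradient_comp_line hU hseg).pow 2)) hφ_le) (by linarith)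

theorem ContDiffOn.pow_mul_sq_sub_le_mul_integral_pow_mul_sq_norm_gradient (hU : IsOpen U)
    (hw : ContDiffOn ℝ 1 w U) (ha : 0 ≤ a) (hab : a ≤ b) (hv : ‖v‖ ≤ 1)
    (hseg : ∀ s ∈ Icc a b, x + s • v ∈ U) (k : ℕ) :
    a ^ k * (w (x + b • v) - w (x + a • v)) ^ 2 ≤
      b * ∫ s in Ioo a b, s ^ k * ‖gradient w (x + s • v)‖ ^ 2 := by
  have hg := (hw.continuousOn_norm_gradient_comp_line hU hseg).pow 2
  calc a ^ k * (w (x + b • v) - w (x + a • v)) ^ 2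
      ≤ a ^ k * ((b - a) * ∫ s in Ioo a b, ‖gradient w (x + s • v)‖ ^ 2) := by
        gcongr
        exact hw.sq_sub_le_mul_integral_sq_norm_gradient hU hab hv hseg
    _ = (b - a) * ∫ s in Ioo a b, a ^ k * ‖gradient w (x + s • v)‖ ^ 2 := by
        rw [integral_const_mul]; ring
    _ ≤ b * ∫ s in Ioo a b, s ^ k * ‖gradient w (x + s • v)‖ ^ 2 := by
        refine mul_le_mul (by linarith)
          (setIntegral_mono_on ?_ ?_ measurableSet_Ioo fun s hs => ?_)
          (setIntegral_nonneg measurableSet_Ioo fun s _ => ?_) (by linarith)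
        · exact (continuousOn_const.mul hg).integrableOn_Icc.mono_set Ioo_subset_Icc_self
        · exact ((continuousOn_pow k).mul hg).integrableOn_Icc.mono_set Ioo_subset_Icc_self
        · exact mul_le_mul_of_nonneg_right (pow_le_pow_left₀ ha hs.1.le k) (sq_nonneg _)
        · exact mul_nonneg (pow_nonneg ha k) (sq_nonneg _)

end Gradient

namespace MeasureTheory

theorem setIntegral_dist_annulus_eq {G F : Type*} [NormedAddCommGroup G] [MeasurableSpace G]
    [BorelSpace G] [NormedAddCommGroup F] [NormedSpace ℝ F] (μ : Measure G)
    [μ.IsAddLeftInvariant] (ξ : G) (a b : ℝ) (f : G → F) :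
    ∫ x in {x | a < dist x ξ ∧ dist x ξ < b}, f x ∂μ =
      ∫ y in {y | a < ‖y‖ ∧ ‖y‖ < b}, f (ξ + y) ∂μ := by
  rw [← (measurePreserving_add_left μ ξ).setIntegral_preimage_emb (measurableEmbedding_addLeft ξ)]
  congr with y
  simp [dist_eq_norm]

theorem measurableSet_annulus {E : Type*} [NormedAddCommGroup E] [MeasurableSpace E]
    [OpensMeasurableSpace E] (a b : ℝ) : MeasurableSet {x : E | a < ‖x‖ ∧ ‖x‖ < b} :=
  measurableSet_Ioo.preimage measurable_norm

local notation "dim" => Module.finrank ℝ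

variable {E F : Type*} [NormedAddCommGroup E] [NormedSpace ℝ E] [NormedAddCommGroup F]

theorem homeomorphUnitSphereProd_smul (x : ({0}ᶜ : Set E)) :
    ((homeomorphUnitSphereProd E x).2 : ℝ) • ((homeomorphUnitSphereProd E x).1 : E) = x := by
  simp [smul_inv_smul₀ (norm_ne_zero_iff.2 x.2)]

theorem Integrable.comp_toSphere_prod [FiniteDimensional ℝ E] [MeasurableSpace E]
    [BorelSpace E] {μ : Measure E} [μ.IsAddHaarMeasure] {f : E → F} (hf : Integrable f μ) :
    Integrable (fun p : sphere (0 : E) 1 × Ioi (0 : ℝ) => f (p.2.1 • p.1.1))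
      (μ.toSphere.prod (Measure.volumeIoiPow (dim E - 1))) := by
  rw [← (μ.measurePreserving_homeomorphUnitSphereProd).integrable_comp_emb
    (Homeomorph.measurableEmbedding _)]
  have : Integrable (f ∘ Subtype.val) (μ.comap (Subtype.val : ({0}ᶜ : Set E) → E)) :=
    (integrableOn_iff_comap_subtypeVal (measurableSet_singleton 0).compl).1 hf.integrableOn
  simpa only [Function.comp_def, homeomorphUnitSphereProd_smul] using this

variable [NormedSpace ℝ F] {a b : ℝ}

theorem integral_volumeIoiPow (n : ℕ) (h : ℝ → F) :
    ∫ r, h r ∂Measure.volumeIoiPow n = ∫ r in Ioi (0 : ℝ), r ^ n • h r := by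
  have hdens : Measurable fun r : Ioi (0 : ℝ) => (r.1 ^ n).toNNReal := by fun_prop
  rw [Measure.volumeIoiPow, ← integral_subtype_comap measurableSet_Ioi]
  simp only [ENNReal.ofReal]
  rw [integral_withDensity_eq_integral_smul hdens]
  refine integral_congr_ae (.of_forall fun r => ?_)
  simp [NNReal.smul_def, Real.coe_toNNReal _ (pow_nonneg r.2.out.le n)]

theorem integral_Ioi_smul_indicator_annulus (ha : 0 ≤ a) (k : ℕ) (f : E → F)
    (θ : sphere (0 : E) 1) :
    ∫ r in Ioi (0 : ℝ), r ^ k • {x : E | a < ‖x‖ ∧ ‖x‖ < b}.indicator f (r • θ.1) =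
      ∫ r in Ioo a b, r ^ k • f (r • θ.1) := by
  rw [← inter_eq_right.2 (Ioo_subset_Ioi_self.trans (Ioi_subset_Ioi ha)),
    ← setIntegral_indicator measurableSet_Ioo]
  refine setIntegral_congr_fun measurableSet_Ioi fun r (hr : 0 < r) => ?_
  have : ‖r • θ.1‖ = r := by
    rw [norm_smul, norm_eq_of_mem_sphere θ, mul_one, Real.norm_of_nonneg hr.le]
  simp only [indicator, mem_ofPred_eq, this, mem_Ioo]
  split_ifs <;> simp

variable [FiniteDimensional ℝ E] [MeasurableSpace E] [BorelSpace E] {μ : Measure E}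
  [μ.IsAddHaarMeasure]

theorem integral_eq_integral_toSphere_prod [Nontrivial E] (f : E → F) :
    ∫ x, f x ∂μ =
      ∫ p, f (p.2.1 • p.1.1) ∂μ.toSphere.prod (Measure.volumeIoiPow (dim E - 1)) := by
  rw [← ((μ.measurePreserving_homeomorphUnitSphereProd).integral_comp
    (Homeomorph.measurableEmbedding _) fun p => f (p.2.1 • p.1.1))]
  simp only [homeomorphUnitSphereProd_smul]
  rw [integral_subtype_comap (measurableSet_singleton 0).compl, restrict_compl_singleton]

theorem Integrable.integrable_toSphere_integral_Ioi {f : E → F} (hf : Integrable f μ) :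
    Integrable (fun θ : sphere (0 : E) 1 => ∫ r in Ioi (0 : ℝ), r ^ (dim E - 1) • f (r • θ.1))
      μ.toSphere :=
  hf.comp_toSphere_prod.integral_prod_left.congr
    (.of_forall fun θ => integral_volumeIoiPow _ fun r => f (r • θ.1))

theorem integral_eq_integral_toSphere_integral_Ioi [Nontrivial E] [CompleteSpace F] {f : E → F}
    (hf : Integrable f μ) :
    ∫ x, f x ∂μ =
      ∫ θ : sphere (0 : E) 1, (∫ r in Ioi (0 : ℝ), r ^ (dim E - 1) • f (r • θ.1)) ∂μ.toSphere := by
  rw [integral_eq_integral_toSphere_prod, integral_prod _ hf.comp_toSphere_prod]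
  exact integral_congr_ae (.of_forall fun θ => integral_volumeIoiPow _ fun r => f (r • θ.1))

theorem IntegrableOn.integrable_toSphere_integral_Ioo {f : E → F} (ha : 0 ≤ a)
    (hf : IntegrableOn f {x | a < ‖x‖ ∧ ‖x‖ < b} μ) :
    Integrable (fun θ : sphere (0 : E) 1 => ∫ r in Ioo a b, r ^ (dim E - 1) • f (r • θ.1))
      μ.toSphere := by
  simpa only [integral_Ioi_smul_indicator_annulus ha] using
    ((integrable_indicator_iff (measurableSet_annulus a b)).2 hf).integrable_toSphere_integral_Ioi

theorem setIntegral_annulus_eq_integral_toSphere_integral_Ioo [Nontrivial E] [CompleteSpace F]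
    {f : E → F} (ha : 0 ≤ a) (hf : IntegrableOn f {x | a < ‖x‖ ∧ ‖x‖ < b} μ) :
    ∫ x in {x | a < ‖x‖ ∧ ‖x‖ < b}, f x ∂μ =
      ∫ θ : sphere (0 : E) 1, (∫ r in Ioo a b, r ^ (dim E - 1) • f (r • θ.1)) ∂μ.toSphere := by
  simpa only [integral_Ioi_smul_indicator_annulus ha,
    integral_indicator (measurableSet_annulus a b)] using integral_eq_integral_toSphere_integral_Ioi
      ((integrable_indicator_iff (measurableSet_annulus a b)).2 hf)

end MeasureTheory

/-- Annulus inequality: comparing boundary values on two spheres with the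
`L²`-norm of the gradient on the annulus between them. Here the unit sphere
carries its surface measure `volume.toSphere`. -/
theorem stmt6 (n : ℕ) (hn : 2 ≤ n) (ξ : Euc n) (t t' : ℝ) (ht : 0 < t) (htt : t < t')
    (w : Euc n → ℝ) (U : Set (Euc n)) (hU : IsOpen U)
    (hsub : {x : Euc n | t ≤ dist x ξ ∧ dist x ξ ≤ t'} ⊆ U)
    (hw : ContDiffOn ℝ 1 w U) :
    t ^ (n - 1) *
        ∫ θ : Metric.sphere (0 : Euc n) 1,
          |w (ξ + t' • (θ : Euc n)) - w (ξ + t • (θ : Euc n))| ^ 2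
            ∂((volume : Measure (Euc n)).toSphere)
      ≤ t' * ∫ x in {x : Euc n | t < dist x ξ ∧ dist x ξ < t'}, ‖gradient w x‖ ^ 2 := by
  have : Nontrivial (Euc n) := Module.nontrivial_of_finrank_pos (R := ℝ)
    (by rw [finrank_euclideanSpace_fin]; omega)
  have hF : IntegrableOn (fun y => ‖gradient w (ξ + y)‖ ^ 2) {y | t < ‖y‖ ∧ ‖y‖ < t'} := by
    have hK : IsCompact {y : Euc n | t ≤ ‖y‖ ∧ ‖y‖ ≤ t'} :=
      (isCompact_closedBall 0 t').of_isClosed_subset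
        ((isClosed_le continuous_const continuous_norm).inter
          (isClosed_le continuous_norm continuous_const))
        fun y hy => mem_closedBall_zero_iff.2 hy.2
    refine (ContinuousOn.integrableOn_compact hK ?_).mono_set fun y hy => ⟨hy.1.le, hy.2.le⟩
    refine ((hw.continuousOn_norm_gradient hU).comp (by fun_prop) fun y hy => hsub ?_).pow 2
    simpa [dist_self_add_left] using hy
  have hradial (θ : sphere (0 : Euc n) 1) :
      t ^ (n - 1) * |w (ξ + t' • θ.1) - w (ξ + t • θ.1)| ^ 2 ≤
        t' * ∫ r in Ioo t t', r ^ (n - 1) • ‖gradient w (ξ + r • θ.1)‖ ^ 2 := by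
    simp only [sq_abs, smul_eq_mul]
    refine hw.pow_mul_sq_sub_le_mul_integral_pow_mul_sq_norm_gradient hU ht.le htt.le
      (norm_eq_of_mem_sphere θ).le (fun s hs => hsub ?_) (n - 1)
    rwa [mem_ofPred_eq, dist_self_add_left, norm_smul, norm_eq_of_mem_sphere θ, mul_one,
      Real.norm_of_nonneg (ht.le.trans hs.1)]
  have hint := (hF.integrable_toSphere_integral_Ioo ht.le).const_mul t'
  rw [setIntegral_dist_annulus_eq, setIntegral_annulus_eq_integral_toSphere_integral_Ioo ht.le hF,
    ← integral_const_mul, ← integral_const_mul]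
  rw [finrank_euclideanSpace_fin] at hint ⊢
  exact integral_mono_of_nonneg (.of_forall fun θ => by positivity) hint (.of_forall hradial)

end
end
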